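/- Let G = (V,E) be a finite undirected simple graph in which every vertex has positive degree, let κ_0 > 0, and let (i,j) ∈ E be an edge such that W_1(m_i, m_j) ≤ 1 − κ_0, where m_v is the uniform probability measure on the neighbors of v and W_1 is the optimal transportation distance with respect to the shortest-path distance of G. Then T_ij ≥ κ_0 · max{d_i, d_j}, where T_ij is the number of common neighbors of i and j and d_i, d_j are the degrees of i and j. -/
import Mathlib


open Finset

/-- The uniform probability measure on the neighbors of `v`: mass `1/d_v` on each neighbor. -/
noncomputable def uniformNbrMeasure {V : Type*} [Fintype V] [DecidableEq V]
    (G : SimpleGraph V) [DecidableRel G.Adj] (v : V) : V → ℝ :=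
  fun k => if k ∈ G.neighborFinset v then (G.degree v : ℝ)⁻¹ else 0

/-- The optimal transportation (Wasserstein-1) distance between two probability measures on the
vertex set of `G`, with cost given by the shortest-path distance: the infimum over all couplings
`ξ` of the total transport cost `Σ_{(k,k')} d(k,k') ξ(k,k')`. -/
noncomputable def wassersteinW1 {V : Type*} [Fintype V] [DecidableEq V]
    (G : SimpleGraph V) (μ ν : V → ℝ) : ℝ :=
  sInf {c : ℝ | ∃ ξ : V × V → ℝ,
    (∀ p, 0 ≤ ξ p) ∧
    (∀ k, ∑ k' : V, ξ (k, k') = μ k) ∧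
    (∀ k', ∑ k : V, ξ (k, k') = ν k') ∧
    c = ∑ p : V × V, (G.dist p.1 p.2 : ℝ) * ξ p}

lemma uniformNbrMeasure_nonneg {V : Type*} [Fintype V] [DecidableEq V]
    (G : SimpleGraph V) [DecidableRel G.Adj] (v k : V) : 0 ≤ uniformNbrMeasure G v k := by
  unfold uniformNbrMeasure
  split <;> positivity

lemma uniformNbrMeasure_sum {V : Type*} [Fintype V] [DecidableEq V]
    (G : SimpleGraph V) [DecidableRel G.Adj] (v : V) (hv : 0 < G.degree v) :
    ∑ k : V, uniformNbrMeasure G v k = 1 := by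
  unfold uniformNbrMeasure
  rw [Finset.sum_ite_mem, Finset.univ_inter, Finset.sum_const, SimpleGraph.card_neighborFinset_eq_degree, nsmul_eq_mul]
  have : (G.degree v : ℝ) ≠ 0 := by positivity
  field_simp

/-- If `(i,j)` is an edge with `W₁(m_i, m_j) ≤ 1 − κ₀` for some `κ₀ > 0`,
then `T_ij ≥ κ₀ · max d_i d_j`. -/
theorem common_neighbors_ge_of_wasserstein_le
    {V : Type*} [Fintype V] [DecidableEq V]
    (G : SimpleGraph V) [DecidableRel G.Adj]
    (hdeg : ∀ v : V, 0 < G.degree v)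
    (κ₀ : ℝ) (hκ₀ : 0 < κ₀)
    (i j : V) (hadj : G.Adj i j)
    (hW : wassersteinW1 G (uniformNbrMeasure G i) (uniformNbrMeasure G j) ≤ 1 - κ₀) :
    ((G.neighborFinset i ∩ G.neighborFinset j).card : ℝ) ≥
      κ₀ * max (G.degree i : ℝ) (G.degree j : ℝ) := by
  classical
  set μ := uniformNbrMeasure G i with hμdef
  set ν := uniformNbrMeasure G j with hνdef
  set T : ℝ := ((G.neighborFinset i ∩ G.neighborFinset j).card : ℝ) with hT
  set D : ℝ := max (G.degree i : ℝ) (G.degree j : ℝ) with hDdef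
  have hdi : (0:ℝ) < G.degree i := by exact_mod_cast hdeg i
  have hdj : (0:ℝ) < G.degree j := by exact_mod_cast hdeg j
  have hD : 0 < D := lt_max_of_lt_left hdi
  -- lower bound on the cost of any coupling
  have lower : ∀ ξ : V × V → ℝ, (∀ p, 0 ≤ ξ p) →
      (∀ k, ∑ k' : V, ξ (k, k') = μ k) → (∀ k', ∑ k : V, ξ (k, k') = ν k') →
      1 - T * D⁻¹ ≤ ∑ p : V × V, (G.dist p.1 p.2 : ℝ) * ξ p := by
    intro ξ hpos hμ hν
    have hle1 : ∀ k k', ξ (k, k') ≤ μ k := by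
      intro k k'
      rw [← hμ k]
      exact Finset.single_le_sum (fun x _ => hpos (k, x)) (Finset.mem_univ k')
    have hle2 : ∀ k k', ξ (k, k') ≤ ν k' := by
      intro k k'
      rw [← hν k']
      exact Finset.single_le_sum (fun x _ => hpos (x, k')) (Finset.mem_univ k)
    have htot : ∑ p : V × V, ξ p = 1 := by
      rw [Fintype.sum_prod_type]
      simp only [hμ]
      exact uniformNbrMeasure_sum G i (hdeg i)
    have hterm : ∀ p : V × V, (if p.1 = p.2 then 0 else ξ p)
        ≤ (G.dist p.1 p.2 : ℝ) * ξ p := by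
      intro p
      by_cases h : p.1 = p.2
      · simp only [h, if_true]
        exact mul_nonneg (by positivity) (hpos p)
      · simp only [h, if_false]
        rcases eq_or_lt_of_le (hpos p) with h0 | h0
        · rw [← h0, mul_zero]
        · have h1 : p.1 ∈ G.neighborFinset i := by
            by_contra hc
            have hz : μ p.1 = 0 := by simp [hμdef, uniformNbrMeasure, hc]
            have := hle1 p.1 p.2
            rw [hz] at this
            exact absurd (lt_of_lt_of_le h0 this) (lt_irrefl 0)
          have h2 : p.2 ∈ G.neighborFinset j := by
            by_contra hc
            have hz : ν p.2 = 0 := by simp [hνdef, uniformNbrMeasure, hc]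
            have := hle2 p.1 p.2
            rw [hz] at this
            exact absurd (lt_of_lt_of_le h0 this) (lt_irrefl 0)
          rw [SimpleGraph.mem_neighborFinset] at h1 h2
          have hreach : G.Reachable p.1 p.2 :=
            (h1.symm.reachable).trans ((hadj.reachable).trans h2.reachable)
          have h1d : 1 ≤ G.dist p.1 p.2 := hreach.pos_dist_of_ne h
          have h1d' : (1:ℝ) ≤ (G.dist p.1 p.2 : ℝ) := by exact_mod_cast h1d
          nlinarith
    have hsum1 : ∑ p : V × V, (if p.1 = p.2 then 0 else ξ p)
        = 1 - ∑ k : V, ξ (k, k) := by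
      have heq : ∀ p : V × V, (if p.1 = p.2 then 0 else ξ p)
          = ξ p - (if p.1 = p.2 then ξ p else 0) := by
        intro p; by_cases h : p.1 = p.2 <;> simp [h]
      rw [Finset.sum_congr rfl (fun p _ => heq p), Finset.sum_sub_distrib, htot]
      congr 1
      rw [Fintype.sum_prod_type]
      apply Finset.sum_congr rfl
      intro k _
      simp
    have hdiag : ∑ k : V, ξ (k, k) ≤ T * D⁻¹ := by
      have hk : ∀ k : V, ξ (k, k)
          ≤ (if k ∈ G.neighborFinset i ∩ G.neighborFinset j then D⁻¹ else 0) := by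
        intro k
        by_cases h1 : k ∈ G.neighborFinset i
        · by_cases h2 : k ∈ G.neighborFinset j
          · simp only [Finset.mem_inter, h1, h2, and_true, if_true]
            have e1 : μ k = (G.degree i : ℝ)⁻¹ := by simp [hμdef, uniformNbrMeasure, h1]
            have e2 : ν k = (G.degree j : ℝ)⁻¹ := by simp [hνdef, uniformNbrMeasure, h2]
            rcases max_choice (G.degree i : ℝ) (G.degree j : ℝ) with h | h
            · rw [hDdef, h, ← e1]; exact hle1 k k
            · rw [hDdef, h, ← e2]; exact hle2 k k
          · have hz : ν k = 0 := by simp [hνdef, uniformNbrMeasure, h2]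
            have := hle2 k k
            rw [hz] at this
            simp only [Finset.mem_inter, h2, and_false, if_false]
            exact this
        · have hz : μ k = 0 := by simp [hμdef, uniformNbrMeasure, h1]
          have := hle1 k k
          rw [hz] at this
          simp only [Finset.mem_inter, h1, false_and, if_false]
          exact this
      calc ∑ k : V, ξ (k, k)
          ≤ ∑ k : V, (if k ∈ G.neighborFinset i ∩ G.neighborFinset j then D⁻¹ else 0) :=
            Finset.sum_le_sum (fun k _ => hk k)
        _ = T * D⁻¹ := by
            rw [Finset.sum_ite_mem, Finset.univ_inter, Finset.sum_const, nsmul_eq_mul, hT]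
    have hmain := Finset.sum_le_sum (fun p (_ : p ∈ Finset.univ) => hterm p)
    rw [hsum1] at hmain
    linarith
  -- the set of coupling costs is nonempty
  have hne : ∃ c, c ∈ {c : ℝ | ∃ ξ : V × V → ℝ,
      (∀ p, 0 ≤ ξ p) ∧
      (∀ k, ∑ k' : V, ξ (k, k') = μ k) ∧
      (∀ k', ∑ k : V, ξ (k, k') = ν k') ∧
      c = ∑ p : V × V, (G.dist p.1 p.2 : ℝ) * ξ p} := by
    refine ⟨_, ⟨fun p => μ p.1 * ν p.2, ?_, ?_, ?_, rfl⟩⟩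
    · intro p
      exact mul_nonneg (uniformNbrMeasure_nonneg G i p.1) (uniformNbrMeasure_nonneg G j p.2)
    · intro k
      show ∑ k' : V, μ k * ν k' = μ k
      rw [← Finset.mul_sum, uniformNbrMeasure_sum G j (hdeg j), mul_one]
    · intro k'
      show ∑ k : V, μ k * ν k' = ν k'
      rw [← Finset.sum_mul, uniformNbrMeasure_sum G i (hdeg i), one_mul]
  -- put it together
  have hlb : 1 - T * D⁻¹ ≤ wassersteinW1 G μ ν := by
    apply le_csInf hne
    rintro c ⟨ξ, hpos, hμ, hν, rfl⟩
    exact lower ξ hpos hμ hν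
  have h1 : 1 - T * D⁻¹ ≤ 1 - κ₀ := le_trans hlb hW
  have h2 : κ₀ ≤ T * D⁻¹ := by linarith
  have h3 := mul_le_mul_of_nonneg_right h2 hD.le
  rw [mul_assoc, inv_mul_cancel₀ (ne_of_gt hD), mul_one] at h3
  exact h3
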